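/- arXiv:2601.09076 — 3 statements merged into one kernel-verified Lean document; each statement's English description precedes it below -/
import Mathlib

section
/- Let f : ℝ^d → ℝ be L-smooth and let μ > 0. Then for every x ∈ ℝ^d the smoothing bias in the gradient satisfies ‖∇f^μ(x) − ∇f(x)‖ ≤ μL; consequently ‖∇f^μ(x) − ∇f(x)‖² ≤ μ²L² (so the bias of the zeroth-order estimator with respect to the true gradient is controlled solely by the smoothing radius μ). -/
open MeasureTheory Metric InnerProductSpace

/-- **Gradient smoothing bias.**
If `f : ℝ^d → ℝ` is `L`-smooth and `μ > 0`, then for every `x` the gradient of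
the sphere-smoothed function `f^μ(x) = ∫_{S^{d-1}} f(x + μu) dσ(u)` satisfies
`‖∇f^μ(x) − ∇f(x)‖ ≤ μL`, hence also `‖∇f^μ(x) − ∇f(x)‖² ≤ μ²L²`. -/
theorem stmt_4 (d : ℕ) (hd : 1 ≤ d) (L μ : ℝ) (hμ : 0 < μ)
    (f : EuclideanSpace ℝ (Fin d) → ℝ)
    (hf_diff : Differentiable ℝ f)
    (hf_lip : ∀ x y, ‖gradient f x - gradient f y‖ ≤ L * ‖x - y‖)
    (σ : Measure (EuclideanSpace ℝ (Fin d))) [IsProbabilityMeasure σ]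
    (hσ_sphere : ∀ᵐ u ∂σ, ‖u‖ = 1)
    (hσ_inv : ∀ R : EuclideanSpace ℝ (Fin d) ≃ₗᵢ[ℝ] EuclideanSpace ℝ (Fin d),
      Measure.map (⇑R) σ = σ)
    (fμ : EuclideanSpace ℝ (Fin d) → ℝ)
    (hfμ : ∀ x, fμ x = ∫ u, f (x + μ • u) ∂σ) :
    ∀ x, ‖gradient fμ x - gradient f x‖ ≤ μ * L ∧
      ‖gradient fμ x - gradient f x‖ ^ 2 ≤ μ ^ 2 * L ^ 2 := by
  have hv : ‖(EuclideanSpace.single (⟨0, hd⟩ : Fin d) (1:ℝ))‖ = 1 := by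
    simp [EuclideanSpace.norm_single]
  have hL : 0 ≤ L := by
    have h := hf_lip (EuclideanSpace.single (⟨0, hd⟩ : Fin d) (1:ℝ)) 0
    simp [hv] at h
    exact le_trans (norm_nonneg _) h
  -- Lipschitz fderiv
  have hfd : ∀ x y : EuclideanSpace ℝ (Fin d),
      ‖fderiv ℝ f x - fderiv ℝ f y‖ ≤ L * ‖x - y‖ := by
    intro x y
    have hnorm : ‖fderiv ℝ f x - fderiv ℝ f y‖ = ‖gradient f x - gradient f y‖ := by
      rw [show gradient f x = (toDual ℝ _).symm (fderiv ℝ f x) from rfl,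
        show gradient f y = (toDual ℝ _).symm (fderiv ℝ f y) from rfl,
        ← LinearIsometryEquiv.map_sub, LinearIsometryEquiv.norm_map]
    rw [hnorm]; exact hf_lip x y
  have hcont : Continuous (fderiv ℝ f) := by
    refine (LipschitzWith.of_dist_le_mul (K := Real.toNNReal L) ?_).continuous
    intro x y
    rw [dist_eq_norm, dist_eq_norm]
    simpa [Real.coe_toNNReal L hL] using hfd x y
  have key : ∀ (y u : EuclideanSpace ℝ (Fin d)),
      HasFDerivAt (fun z => f (z + μ • u)) (fderiv ℝ f (y + μ • u)) y := by
    intro y u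
    have h1 : HasFDerivAt (fun z : EuclideanSpace ℝ (Fin d) => z + μ • u)
        (ContinuousLinearMap.id ℝ (EuclideanSpace ℝ (Fin d))) y :=
      (hasFDerivAt_id y).add_const _
    have := (hf_diff (y + μ • u)).hasFDerivAt.comp y h1
    exact this
  intro x
  have hmeas : ∀ y : EuclideanSpace ℝ (Fin d),
      AEStronglyMeasurable (fun u => f (y + μ • u)) σ := by
    intro y
    exact ((hf_diff.continuous.comp
      (continuous_const.add (continuous_id.const_smul μ))).aestronglyMeasurable :
      AEStronglyMeasurable (fun u => f (y + μ • u)) σ)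
  have hmeas' : AEStronglyMeasurable (fun u => fderiv ℝ f (x + μ • u)) σ :=
    ((hcont.comp (continuous_const.add (continuous_id.const_smul μ))).aestronglyMeasurable :
      AEStronglyMeasurable (fun u => fderiv ℝ f (x + μ • u)) σ)
  have hF_int : Integrable (fun u => f (x + μ • u)) σ := by
    refine Integrable.mono'
      (integrable_const (‖f x‖ + (‖fderiv ℝ f x‖ + L * (μ + 1)) * μ)) (hmeas x) ?_
    filter_upwards [hσ_sphere] with u hu
    have hmem : x + μ • u ∈ ball x (μ + 1) := by
      simp only [mem_ball, dist_eq_norm, add_sub_cancel_left, norm_smul, Real.norm_eq_abs,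
        abs_of_pos hμ, hu, mul_one]
      linarith
    have hC : ∀ z ∈ ball x (μ + 1), ‖fderiv ℝ f z‖ ≤ ‖fderiv ℝ f x‖ + L * (μ + 1) := by
      intro z hz
      have h1 : ‖fderiv ℝ f z - fderiv ℝ f x‖ ≤ L * (μ + 1) := by
        refine (hfd z x).trans ?_
        exact mul_le_mul_of_nonneg_left (le_of_lt (by simpa [dist_eq_norm] using hz)) hL
      calc ‖fderiv ℝ f z‖ ≤ ‖fderiv ℝ f x‖ + ‖fderiv ℝ f z - fderiv ℝ f x‖ := by
            simpa using norm_add_le (fderiv ℝ f x) (fderiv ℝ f z - fderiv ℝ f x)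
        _ ≤ _ := by linarith
    have hmv := Convex.norm_image_sub_le_of_norm_fderiv_le
      (fun z _ => hf_diff z) hC (convex_ball x (μ + 1))
      (mem_ball_self (by linarith)) hmem
    have h2 : ‖x + μ • u - x‖ = μ := by
      simp [norm_smul, abs_of_pos hμ, hu]
    rw [h2] at hmv
    have h3 : L * (μ + 1) ≥ 0 := by positivity
    calc ‖f (x + μ • u)‖ ≤ ‖f x‖ + ‖f (x + μ • u) - f x‖ := by
          simpa using norm_add_le (f x) (f (x + μ • u) - f x)
      _ ≤ _ := by nlinarith [hmv]
  have h_bound : ∀ᵐ u ∂σ, ∀ y ∈ ball x 1,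
      ‖fderiv ℝ f (y + μ • u)‖ ≤ ‖fderiv ℝ f x‖ + L * (1 + μ) := by
    filter_upwards [hσ_sphere] with u hu y hy
    have h1 : ‖fderiv ℝ f (y + μ • u) - fderiv ℝ f x‖ ≤ L * (1 + μ) := by
      refine (hfd _ _).trans ?_
      refine mul_le_mul_of_nonneg_left ?_ hL
      have h2 : ‖y - x‖ < 1 := by simpa [dist_eq_norm] using hy
      have h3 : ‖μ • u‖ = μ := by simp [norm_smul, abs_of_pos hμ, hu]
      calc ‖y + μ • u - x‖ ≤ ‖y - x‖ + ‖μ • u‖ := by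
            simpa [add_sub_right_comm] using norm_add_le (y - x) (μ • u)
        _ ≤ 1 + μ := by linarith
    calc ‖fderiv ℝ f (y + μ • u)‖
        ≤ ‖fderiv ℝ f x‖ + ‖fderiv ℝ f (y + μ • u) - fderiv ℝ f x‖ := by
          simpa using norm_add_le (fderiv ℝ f x) (fderiv ℝ f (y + μ • u) - fderiv ℝ f x)
      _ ≤ _ := by linarith
  have HD : HasFDerivAt (fun y => ∫ u, f (y + μ • u) ∂σ)
      (∫ u, fderiv ℝ f (x + μ • u) ∂σ) x := by
    refine hasFDerivAt_integral_of_dominated_of_fderiv_le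
      (F' := fun y u => fderiv ℝ f (y + μ • u))
      (bound := fun _ => ‖fderiv ℝ f x‖ + L * (1 + μ)) (ball_mem_nhds x one_pos)
      (Filter.Eventually.of_forall hmeas) hF_int hmeas' h_bound (integrable_const _) ?_
    filter_upwards with u y _
    exact key y u
  have HDμ : HasFDerivAt fμ (∫ u, fderiv ℝ f (x + μ • u) ∂σ) x := by
    have he : fμ = fun y => ∫ u, f (y + μ • u) ∂σ := funext hfμ
    rw [he]; exact HD
  have hint2 : Integrable (fun u => fderiv ℝ f (x + μ • u)) σ := by
    refine Integrable.mono' (integrable_const (‖fderiv ℝ f x‖ + L * μ)) hmeas' ?_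
    filter_upwards [hσ_sphere] with u hu
    have h1 : ‖fderiv ℝ f (x + μ • u) - fderiv ℝ f x‖ ≤ L * μ := by
      refine (hfd _ _).trans ?_
      simp [norm_smul, abs_of_pos hμ, hu]
    calc ‖fderiv ℝ f (x + μ • u)‖
        ≤ ‖fderiv ℝ f x‖ + ‖fderiv ℝ f (x + μ • u) - fderiv ℝ f x‖ := by
          simpa using norm_add_le (fderiv ℝ f x) (fderiv ℝ f (x + μ • u) - fderiv ℝ f x)
      _ ≤ _ := by linarith
  have hmain : ‖gradient fμ x - gradient f x‖ ≤ μ * L := by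
    have hgrad : gradient fμ x - gradient f x
        = (toDual ℝ (EuclideanSpace ℝ (Fin d))).symm
            (∫ u, (fderiv ℝ f (x + μ • u) - fderiv ℝ f x) ∂σ) := by
      rw [integral_sub hint2 (integrable_const _), integral_const, probReal_univ,
        one_smul, LinearIsometryEquiv.map_sub,
        show gradient fμ x = (toDual ℝ _).symm (fderiv ℝ fμ x) from rfl,
        show gradient f x = (toDual ℝ _).symm (fderiv ℝ f x) from rfl, HDμ.fderiv]
    rw [hgrad, LinearIsometryEquiv.norm_map]
    have hb : ∀ᵐ u ∂σ, ‖fderiv ℝ f (x + μ • u) - fderiv ℝ f x‖ ≤ (fun _ => μ * L) u := by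
      filter_upwards [hσ_sphere] with u hu
      refine (hfd _ _).trans ?_
      simp [norm_smul, abs_of_pos hμ, hu, mul_comm]
    have h4 := norm_integral_le_of_norm_le (integrable_const (μ * L)) hb
    simpa using h4
  refine ⟨hmain, ?_⟩
  calc ‖gradient fμ x - gradient f x‖ ^ 2 ≤ (μ * L) ^ 2 :=
        pow_le_pow_left₀ (norm_nonneg _) hmain 2
    _ = μ ^ 2 * L ^ 2 := by ring
end

section
/- Let f : ℝ^d → ℝ be L-smooth, let μ > 0 and x ∈ ℝ^d. Then the second moment of the single-sample two-point zeroth-order gradient estimator is bounded as ∫_{S^{d-1}} ‖(d/μ)·(f(x + μu) − f(x))·u‖² dσ(u) ≤ 2d·‖∇f(x)‖² + (μ²L²d²)/2. -/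
open MeasureTheory

section Aux

variable {d : ℕ}

local notation "E" => EuclideanSpace ℝ (Fin d)

lemma aux_integrable (σ : Measure E) [IsProbabilityMeasure σ]
    (hσ_sphere : ∀ᵐ u ∂σ, ‖u‖ = 1) (v : E) :
    Integrable (fun u : E => (inner ℝ v u : ℝ) ^ 2) σ := by
  apply Integrable.mono' (integrable_const (‖v‖ ^ 2))
  · exact (Continuous.pow (continuous_const.inner continuous_id) 2).aestronglyMeasurable
  · filter_upwards [hσ_sphere] with u hu
    have h1 : |(inner ℝ v u : ℝ)| ≤ ‖v‖ * ‖u‖ := abs_real_inner_le_norm v u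
    rw [hu, mul_one] at h1
    have := sq_abs (inner ℝ v u : ℝ)
    rw [Real.norm_eq_abs, abs_pow]
    calc |(inner ℝ v u : ℝ)| ^ 2 ≤ ‖v‖ ^ 2 := by
          apply pow_le_pow_left₀ (abs_nonneg _) h1
  
lemma aux_rot (σ : Measure E)
    (hσ_inv : ∀ R : E ≃ₗᵢ[ℝ] E, Measure.map (⇑R) σ = σ)
    (v w : E) (h : ‖v‖ = ‖w‖) :
    ∫ u, (inner ℝ v u : ℝ) ^ 2 ∂σ = ∫ u, (inner ℝ w u : ℝ) ^ 2 ∂σ := by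
  set R := Submodule.reflection (ℝ ∙ (v - w))ᗮ with hR
  have hRv : R v = w := Submodule.reflection_sub h
  have hRw : R w = v := by
    conv_lhs => rw [← hRv]
    exact Submodule.reflection_reflection _ v
  calc ∫ u, (inner ℝ v u : ℝ) ^ 2 ∂σ
      = ∫ u, (inner ℝ v u : ℝ) ^ 2 ∂(Measure.map (⇑R) σ) := by rw [hσ_inv R]
    _ = ∫ u, (inner ℝ v (R u) : ℝ) ^ 2 ∂σ := by
        rw [integral_map R.continuous.measurable.aemeasurable
          (Continuous.pow (continuous_const.inner continuous_id) 2).aestronglyMeasurable]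
    _ = ∫ u, (inner ℝ w u : ℝ) ^ 2 ∂σ := by
        congr 1; funext u
        rw [← hRw, LinearIsometryEquiv.inner_map_map]

lemma aux_inner_sq (hd : 1 ≤ d) (σ : Measure E) [IsProbabilityMeasure σ]
    (hσ_sphere : ∀ᵐ u ∂σ, ‖u‖ = 1)
    (hσ_inv : ∀ R : E ≃ₗᵢ[ℝ] E, Measure.map (⇑R) σ = σ)
    (v : E) :
    ∫ u, (inner ℝ v u : ℝ) ^ 2 ∂σ = ‖v‖ ^ 2 / d := by
  have hd0 : (d : ℝ) ≠ 0 := Nat.cast_ne_zero.mpr (by omega)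
  set e : Fin d → E := fun i => EuclideanSpace.single i (1 : ℝ) with he
  have hne : ∀ i, ‖e i‖ = 1 := by
    intro i; rw [he]; simp [EuclideanSpace.norm_single]
  set i0 : Fin d := ⟨0, by omega⟩
  set c : ℝ := ∫ u, (inner ℝ (e i0) u : ℝ) ^ 2 ∂σ with hc
  have hsame : ∀ i, ∫ u, (inner ℝ (e i) u : ℝ) ^ 2 ∂σ = c :=
    fun i => aux_rot σ hσ_inv (e i) (e i0) (by rw [hne, hne])
  have hsum : (d : ℝ) * c = 1 := by
    have h1 : ∫ u, (∑ i, (inner ℝ (e i) u : ℝ) ^ 2) ∂σ = ∑ i, ∫ u, (inner ℝ (e i) u : ℝ) ^ 2 ∂σ :=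
      integral_finset_sum _ (fun i _ => aux_integrable σ hσ_sphere (e i))
    have h2 : ∫ u, (∑ i, (inner ℝ (e i) u : ℝ) ^ 2) ∂σ = 1 := by
      rw [show (1 : ℝ) = ∫ _u, (1 : ℝ) ∂σ by simp]
      apply integral_congr_ae
      filter_upwards [hσ_sphere] with u hu
      have : ∀ i, (inner ℝ (e i) u : ℝ) = u i := by
        intro i; rw [he]; simp [EuclideanSpace.inner_single_left]
      simp_rw [this]
      have hnorm : ‖u‖ ^ 2 = ∑ i, (u i) ^ 2 := by
        rw [EuclideanSpace.norm_eq, Real.sq_sqrt (by positivity)]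
        simp [Real.norm_eq_abs, sq_abs]
      rw [← hnorm, hu, one_pow]
    rw [h1] at h2
    simp_rw [hsame] at h2
    simpa [mul_comm] using h2
  have hv : ∫ u, (inner ℝ v u : ℝ) ^ 2 ∂σ = ‖v‖ ^ 2 * c := by
    have h3 : ∫ u, (inner ℝ v u : ℝ) ^ 2 ∂σ = ∫ u, (inner ℝ (‖v‖ • e i0) u : ℝ) ^ 2 ∂σ :=
      aux_rot σ hσ_inv v (‖v‖ • e i0) (by
        rw [norm_smul, hne, mul_one, Real.norm_eq_abs, abs_norm])
    rw [h3]
    simp_rw [real_inner_smul_left, mul_pow]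
    rw [integral_const_mul]
  rw [hv]
  field_simp
  nlinarith [hsum]

lemma aux_fderiv_eq (f : E → ℝ) (z w : E) :
    (fderiv ℝ f z) w = (inner ℝ (gradient f z) w : ℝ) := by
  rw [gradient, InnerProductSpace.toDual_symm_apply]

lemma aux_taylor (L : ℝ) (f : E → ℝ) (hf : Differentiable ℝ f)
    (hlip : ∀ a b, ‖gradient f a - gradient f b‖ ≤ L * ‖a - b‖) (x v : E) :
    |f (x + v) - f x - (inner ℝ (gradient f x) v : ℝ)| ≤ L * ‖v‖ ^ 2 / 2 := by
  set g' : ℝ → ℝ := fun t => (inner ℝ (gradient f (x + t • v)) v : ℝ) with hg'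
  have hgrad_cont : Continuous (gradient f) := by
    have hL0 : 0 ≤ L ∨ ∀ a b, gradient f a = gradient f b := by
      by_cases h : ∀ a b, gradient f a = gradient f b
      · exact Or.inr h
      · push_neg at h
        obtain ⟨a, b, hab⟩ := h
        left
        have h1 := hlip a b
        have h2 : 0 < ‖gradient f a - gradient f b‖ := by
          rw [norm_pos_iff]; exact sub_ne_zero_of_ne hab
        nlinarith [norm_nonneg (a - b), mul_nonneg (le_of_lt h2) (norm_nonneg (a-b))]
    rcases hL0 with hL | hconst
    · exact (LipschitzWith.of_dist_le_mul (fun a b => by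
        rw [dist_eq_norm, dist_eq_norm]
        calc ‖gradient f a - gradient f b‖ ≤ L * ‖a - b‖ := hlip a b
          _ = L.toNNReal * ‖a - b‖ := by rw [Real.coe_toNNReal L hL])).continuous
    · exact (continuous_const (y := gradient f 0)).congr (fun a => hconst 0 a)
  have hg'_cont : Continuous g' := by
    apply Continuous.inner
    · exact hgrad_cont.comp (by continuity)
    · exact continuous_const
  have hderiv : ∀ t ∈ Set.uIcc (0:ℝ) 1, HasDerivAt (fun t : ℝ => f (x + t • v)) (g' t) t := by
    intro t _
    have h1 : HasFDerivAt f (fderiv ℝ f (x + t • v)) (x + t • v) := (hf _).hasFDerivAt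
    have h2 : HasDerivAt (fun t : ℝ => x + t • v) v t := by
      simpa using ((hasDerivAt_id t).smul_const v).const_add x
    have := h1.comp_hasDerivAt t h2
    show HasDerivAt (fun t : ℝ => f (x + t • v)) (inner ℝ (gradient f (x + t • v)) v) t
    rw [← aux_fderiv_eq]
    exact this
  have hFTC : ∫ t in (0:ℝ)..1, g' t = f (x + v) - f x := by
    have := intervalIntegral.integral_eq_sub_of_hasDerivAt hderiv
      (hg'_cont.intervalIntegrable 0 1)
    simpa using this
  have hconst : (inner ℝ (gradient f x) v : ℝ) = ∫ t in (0:ℝ)..1, (inner ℝ (gradient f x) v : ℝ) := by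
    simp
  rw [← hFTC, hconst, ← intervalIntegral.integral_sub (hg'_cont.intervalIntegrable 0 1)
    (intervalIntegrable_const)]
  have hbound : ∀ t ∈ Set.Icc (0:ℝ) 1, ‖g' t - (inner ℝ (gradient f x) v : ℝ)‖ ≤ (L * ‖v‖ ^ 2) * t := by
    intro t ht
    rw [hg']
    have h1 : (inner ℝ (gradient f (x + t • v)) v : ℝ) - (inner ℝ (gradient f x) v : ℝ)
        = (inner ℝ (gradient f (x + t • v) - gradient f x) v : ℝ) := by
      rw [inner_sub_left]
    rw [Real.norm_eq_abs, h1]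
    calc |(inner ℝ (gradient f (x + t • v) - gradient f x) v : ℝ)|
        ≤ ‖gradient f (x + t • v) - gradient f x‖ * ‖v‖ := abs_real_inner_le_norm _ _
      _ ≤ (L * ‖x + t • v - x‖) * ‖v‖ := by
          apply mul_le_mul_of_nonneg_right (hlip _ _) (norm_nonneg v)
      _ = (L * ‖v‖ ^ 2) * t := by
          rw [add_sub_cancel_left, norm_smul, Real.norm_eq_abs, abs_of_nonneg ht.1]
          ring
  have hLv : 0 ≤ L * ‖v‖ ^ 2 := by
    have := hbound 1 ⟨zero_le_one, le_refl 1⟩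
    have h0 := norm_nonneg (g' 1 - (inner ℝ (gradient f x) v : ℝ))
    nlinarith
  have habs : ‖∫ t in (0:ℝ)..1, (g' t - (inner ℝ (gradient f x) v : ℝ))‖
      ≤ |∫ t in (0:ℝ)..1, (L * ‖v‖ ^ 2) * t| := by
    refine le_trans ?_ (le_abs_self _)
    apply intervalIntegral.norm_integral_le_of_norm_le zero_le_one
    · exact Filter.Eventually.of_forall (fun t ht => hbound t ⟨le_of_lt ht.1, ht.2⟩)
    · exact (Continuous.intervalIntegrable (by continuity) 0 1)
  have hval : ∫ t in (0:ℝ)..1, (L * ‖v‖ ^ 2) * t = L * ‖v‖ ^ 2 / 2 := by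
    rw [intervalIntegral.integral_const_mul, integral_id]
    ring
  rw [← Real.norm_eq_abs]
  rw [hval, abs_of_nonneg (by linarith)] at habs
  exact habs

end Aux

/-- **Second-moment bound for the two-point zeroth-order estimator.**
Let `f : ℝ^d → ℝ` be `L`-smooth, `μ > 0`, `x ∈ ℝ^d`, and `σ` the uniform
probability measure on the unit sphere `S^{d-1}`. Then
`∫_{S^{d-1}} ‖(d/μ)(f(x+μu) − f(x)) u‖² dσ(u) ≤ 2d‖∇f(x)‖² + μ²L²d²/2`. -/
theorem stmt_8 (d : ℕ) (hd : 1 ≤ d) (L μ : ℝ) (hμ : 0 < μ)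
    (f : EuclideanSpace ℝ (Fin d) → ℝ)
    (hf_diff : Differentiable ℝ f)
    (hf_lip : ∀ x y, ‖gradient f x - gradient f y‖ ≤ L * ‖x - y‖)
    (σ : Measure (EuclideanSpace ℝ (Fin d))) [IsProbabilityMeasure σ]
    (hσ_sphere : ∀ᵐ u ∂σ, ‖u‖ = 1)
    (hσ_inv : ∀ R : EuclideanSpace ℝ (Fin d) ≃ₗᵢ[ℝ] EuclideanSpace ℝ (Fin d),
      Measure.map (⇑R) σ = σ)
    (x : EuclideanSpace ℝ (Fin d)) :
    ∫ u, ‖(((d : ℝ) / μ) * (f (x + μ • u) - f x)) • u‖ ^ 2 ∂σ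
      ≤ 2 * d * ‖gradient f x‖ ^ 2 + μ ^ 2 * L ^ 2 * d ^ 2 / 2 := by
  have hd0 : (d : ℝ) ≠ 0 := Nat.cast_ne_zero.mpr (by omega)
  set g := gradient f x with hg
  set h : EuclideanSpace ℝ (Fin d) → ℝ :=
    fun u => ‖(((d : ℝ) / μ) * (f (x + μ • u) - f x)) • u‖ ^ 2 with hh
  set B : EuclideanSpace ℝ (Fin d) → ℝ :=
    fun u => 2 * (d:ℝ)^2 * (inner ℝ g u : ℝ)^2 + (d:ℝ)^2 * L^2 * μ^2 / 2 with hB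
  -- pointwise bound
  have hpt : ∀ᵐ u ∂σ, h u ≤ B u := by
    filter_upwards [hσ_sphere] with u hu
    have htay := aux_taylor L f hf_diff hf_lip x (μ • u)
    have hnorm_mu : ‖μ • u‖ = μ := by
      rw [norm_smul, hu, mul_one, Real.norm_eq_abs, abs_of_pos hμ]
    rw [hnorm_mu] at htay
    set r : ℝ := f (x + μ • u) - f x - (inner ℝ g (μ • u) : ℝ) with hr
    have hrle : |r| ≤ L * μ^2 / 2 := htay
    have hinner : (inner ℝ g (μ • u) : ℝ) = μ * (inner ℝ g u : ℝ) := real_inner_smul_right g u μ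
    have hval : f (x + μ • u) - f x = μ * (inner ℝ g u : ℝ) + r := by
      rw [hr, hinner]; ring
    rw [hh, hB]
    simp only [norm_smul, mul_pow, Real.norm_eq_abs, hu, one_pow, mul_one]
    rw [hval]
    set A : ℝ := (inner ℝ g u : ℝ) with hA
    have h1 : |(d:ℝ)/μ * (μ * A + r)|^2 = ((d:ℝ)/μ)^2 * (μ * A + r)^2 := by
      rw [abs_mul, mul_pow, sq_abs, sq_abs]
    rw [h1]
    have hdp : (0:ℝ) ≤ ((d:ℝ)/μ)^2 := sq_nonneg _
    have h2 : (μ * A + r)^2 ≤ 2*(μ*A)^2 + 2*r^2 := by nlinarith [sq_nonneg (μ*A - r)]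
    have h3 : r^2 ≤ (L*μ^2/2)^2 := by
      obtain ⟨hb1, hb2⟩ := abs_le.mp hrle
      exact sq_le_sq' hb1 hb2
    have hμ0 : μ ≠ 0 := ne_of_gt hμ
    have h4 : (μ * A + r)^2 ≤ 2*(μ*A)^2 + 2*(L*μ^2/2)^2 := by
      clear_value A r
      linarith
    calc ((d:ℝ)/μ)^2 * (μ * A + r)^2
        ≤ ((d:ℝ)/μ)^2 * (2*(μ*A)^2 + 2*(L*μ^2/2)^2) :=
          mul_le_mul_of_nonneg_left h4 hdp
      _ = 2 * (d:ℝ)^2 * A^2 + (d:ℝ)^2 * L^2 * μ^2 / 2 := by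
          field_simp
  -- integrability
  have hB_int : Integrable B σ := by
    rw [hB]
    exact ((aux_integrable σ hσ_sphere g).const_mul _).add (integrable_const _)
  have hh_int : Integrable h σ := by
    apply Integrable.mono' hB_int
    · apply Continuous.aestronglyMeasurable
      apply Continuous.pow
      apply Continuous.norm
      apply Continuous.smul (f := fun u => ((d : ℝ) / μ) * (f (x + μ • u) - f x)) (g := fun u => u) _ continuous_id
      exact continuous_const.mul ((hf_diff.continuous.comp
        (continuous_const.add (continuous_id.const_smul μ))).sub continuous_const)
    · filter_upwards [hpt, hσ_sphere] with u hu hu1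
      rw [Real.norm_eq_abs, abs_of_nonneg (by positivity)]
      exact hu
  have hint := integral_mono_ae hh_int hB_int hpt
  have hBval : ∫ u, B u ∂σ = 2 * d * ‖g‖^2 + μ^2 * L^2 * d^2 / 2 := by
    rw [hB]
    rw [integral_add ((aux_integrable σ hσ_sphere g).const_mul _) (integrable_const _)]
    rw [integral_const, integral_const_mul, aux_inner_sq hd σ hσ_sphere hσ_inv g]
    simp only [measure_univ, probReal_univ, ENNReal.toReal_one, one_smul, smul_eq_mul]
    field_simp
  calc ∫ u, h u ∂σ ≤ ∫ u, B u ∂σ := hint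
    _ = 2 * d * ‖g‖^2 + μ^2 * L^2 * d^2 / 2 := hBval
end

section
/- Let L > 0, η > 0, β ≥ 0 and let h ≥ 1 be an integer with η ≤ 1/(3Lh). Suppose s_1, …, s_h are nonnegative reals satisfying, for every τ ∈ {1, …, h}, the drift recursion s_τ ≤ 6L²τη²·Σ_{m=1}^{τ} s_m + τ²η²β. Then the total client-model divergence is bounded as Σ_{τ=1}^{h} s_τ ≤ (η²β/2)·h(h+1)(2h+1); in particular Σ_{τ=1}^{h} s_τ ≤ 3h³η²β. -/
/-!
Summing the recursion over `τ ≤ h` and bounding each partial sum by the total `S` gives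
`S ≤ 6 L² h² η² S + η² β Σ τ²`. The step-size condition makes the factor in front of `S` at
most `2/3`, so it can be absorbed into the left-hand side: `S ≤ 3 η² β Σ τ²`, which is the
first bound by the formula for `Σ τ²`; the second follows from `h (h + 1) (2h + 1) ≤ 6 h³`.
-/

open Finset

lemma sum_Icc_one_sq_cast (n : ℕ) :
    ∑ τ ∈ Icc 1 n, (τ : ℝ) ^ 2 = n * (n + 1) * (2 * n + 1) / 6 := by
  induction n with
  | zero => simp
  | succ k ih =>
    rw [sum_Icc_succ_top (by omega), ih]
    push_cast
    ring

lemma cast_mul_succ_mul_two_mul_add_one_le (n : ℕ) :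
    (n : ℝ) * (n + 1) * (2 * n + 1) ≤ 6 * (n : ℝ) ^ 3 := by
  rcases Nat.eq_zero_or_pos n with rfl | hn
  · simp
  · have hn' : (1 : ℝ) ≤ n := by exact_mod_cast hn
    have hfactor : 0 ≤ (n : ℝ) * (n - 1) * (4 * n + 1) := by
      apply mul_nonneg (mul_nonneg _ _) <;> linarith
    linarith

lemma six_mul_sq_mul_sq_mul_sq_le {L η x : ℝ} (hL : 0 ≤ L) (hη : 0 ≤ η) (hx : 0 ≤ x)
    (hηL : η ≤ 1 / (3 * L * x)) : 6 * L ^ 2 * x ^ 2 * η ^ 2 ≤ 2 / 3 := by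
  have ht : 0 ≤ 3 * L * x := by positivity
  have hle : η * (3 * L * x) ≤ 1 :=
    calc η * (3 * L * x) ≤ (3 * L * x)⁻¹ * (3 * L * x) := by
          rw [← one_div]; exact mul_le_mul_of_nonneg_right hηL ht
      _ ≤ 1 := inv_mul_le_one
  have hsq : (η * (3 * L * x)) ^ 2 ≤ 1 := pow_le_one₀ (by positivity) hle
  calc 6 * L ^ 2 * x ^ 2 * η ^ 2 = 2 / 3 * (η * (3 * L * x)) ^ 2 := by ring
    _ ≤ 2 / 3 := by linarith

lemma sum_Icc_le_of_le_mul_partial_sum {s b : ℕ → ℝ} {a : ℝ} {h : ℕ} (ha : 0 ≤ a)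
    (hs : ∀ τ ∈ Icc 1 h, 0 ≤ s τ)
    (hrec : ∀ τ ∈ Icc 1 h, s τ ≤ a * τ * (∑ m ∈ Icc 1 τ, s m) + b τ) :
    ∑ τ ∈ Icc 1 h, s τ ≤ a * (h : ℝ) ^ 2 * (∑ τ ∈ Icc 1 h, s τ) + ∑ τ ∈ Icc 1 h, b τ := by
  set S := ∑ τ ∈ Icc 1 h, s τ
  have hterm : ∀ τ ∈ Icc 1 h, s τ ≤ a * h * S + b τ := by
    intro τ hτ
    have hτh : τ ≤ h := (mem_Icc.mp hτ).2
    have hsub : Icc 1 τ ⊆ Icc 1 h := Icc_subset_Icc_right hτh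
    have hpartial_nonneg : 0 ≤ ∑ m ∈ Icc 1 τ, s m :=
      sum_nonneg fun m hm => hs m (hsub hm)
    have hpartial_le : ∑ m ∈ Icc 1 τ, s m ≤ S :=
      sum_le_sum_of_subset_of_nonneg hsub fun m hm _ => hs m hm
    have hcoef : a * τ ≤ a * h := mul_le_mul_of_nonneg_left (by exact_mod_cast hτh) ha
    have := mul_le_mul hcoef hpartial_le hpartial_nonneg (by positivity)
    linarith [hrec τ hτ]
  calc S ≤ ∑ τ ∈ Icc 1 h, (a * h * S + b τ) := sum_le_sum hterm
    _ = a * (h : ℝ) ^ 2 * S + ∑ τ ∈ Icc 1 h, b τ := by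
      rw [sum_add_distrib, sum_const, Nat.card_Icc, nsmul_eq_mul]
      push_cast
      ring

theorem stmt_11_general (L η β : ℝ) (hL : 0 < L) (hη : 0 < η) (hβ : 0 ≤ β)
    (h : ℕ) (hηL : η ≤ 1 / (3 * L * h))
    (s : ℕ → ℝ)
    (hs_nonneg : ∀ τ ∈ Finset.Icc 1 h, 0 ≤ s τ)
    (hrec : ∀ τ ∈ Finset.Icc 1 h,
      s τ ≤ 6 * L ^ 2 * (τ : ℝ) * η ^ 2 * (∑ m ∈ Finset.Icc 1 τ, s m)
        + (τ : ℝ) ^ 2 * η ^ 2 * β) :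
    (∑ τ ∈ Finset.Icc 1 h, s τ)
        ≤ η ^ 2 * β / 2 * ((h : ℝ) * ((h : ℝ) + 1) * (2 * (h : ℝ) + 1)) ∧
      (∑ τ ∈ Finset.Icc 1 h, s τ) ≤ 3 * (h : ℝ) ^ 3 * η ^ 2 * β := by
  set S := ∑ τ ∈ Icc 1 h, s τ
  have hsum := sum_Icc_le_of_le_mul_partial_sum (a := 6 * L ^ 2 * η ^ 2)
    (b := fun τ => (τ : ℝ) ^ 2 * η ^ 2 * β) (by positivity) hs_nonneg
    fun τ hτ => (hrec τ hτ).trans_eq (by ring)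
  have hcoef : 6 * L ^ 2 * η ^ 2 * (h : ℝ) ^ 2 ≤ 2 / 3 := by
    linarith [six_mul_sq_mul_sq_mul_sq_le hL.le hη.le (Nat.cast_nonneg h) hηL]
  have hbeta : ∑ τ ∈ Icc 1 h, (τ : ℝ) ^ 2 * η ^ 2 * β
      = η ^ 2 * β * ((h : ℝ) * (h + 1) * (2 * h + 1)) / 6 := by
    rw [← sum_mul, ← sum_mul, sum_Icc_one_sq_cast]
    ring
  have habsorb := mul_le_mul_of_nonneg_right hcoef (sum_nonneg hs_nonneg : 0 ≤ S)
  have hfirst : S ≤ η ^ 2 * β / 2 * ((h : ℝ) * (h + 1) * (2 * h + 1)) := by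
    linarith
  refine ⟨hfirst, hfirst.trans ?_⟩
  have := mul_le_mul_of_nonneg_left (cast_mul_succ_mul_two_mul_add_one_le h)
    (by positivity : 0 ≤ η ^ 2 * β / 2)
  linarith

/-- **Client-model divergence recursion.**
Let `L > 0`, `η > 0`, `β ≥ 0` and `h ≥ 1` with `η ≤ 1/(3Lh)`. If nonnegative
reals `s_1, …, s_h` satisfy the drift recursion
`s_τ ≤ 6L²τη²·Σ_{m=1}^τ s_m + τ²η²β` for every `τ ∈ {1,…,h}`, then
`Σ_{τ=1}^h s_τ ≤ (η²β/2)·h(h+1)(2h+1)`, and in particular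
`Σ_{τ=1}^h s_τ ≤ 3h³η²β`. -/
theorem stmt_11 (L η β : ℝ) (hL : 0 < L) (hη : 0 < η) (hβ : 0 ≤ β)
    (h : ℕ) (hh : 1 ≤ h) (hηL : η ≤ 1 / (3 * L * h))
    (s : ℕ → ℝ)
    (hs_nonneg : ∀ τ ∈ Finset.Icc 1 h, 0 ≤ s τ)
    (hrec : ∀ τ ∈ Finset.Icc 1 h,
      s τ ≤ 6 * L ^ 2 * (τ : ℝ) * η ^ 2 * (∑ m ∈ Finset.Icc 1 τ, s m)
        + (τ : ℝ) ^ 2 * η ^ 2 * β) :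
    (∑ τ ∈ Finset.Icc 1 h, s τ)
        ≤ η ^ 2 * β / 2 * ((h : ℝ) * ((h : ℝ) + 1) * (2 * (h : ℝ) + 1)) ∧
      (∑ τ ∈ Finset.Icc 1 h, s τ) ≤ 3 * (h : ℝ) ^ 3 * η ^ 2 * β :=
  stmt_11_general L η β hL hη hβ h hηL s hs_nonneg hrec
end
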